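/- arXiv:1605.07532 — 3 statements merged into one kernel-verified Lean document; each statement's English description precedes it below -/
import Mathlib

section
/- Let 0 < s ≤ 1/5 and, for y ∈ ℝ, define S(x,y) = sup{ w(x) − w(y) : w is a continuous 1-periodic viscosity subsolution of F(|3/2 + w'(x)|) − V(x) = 1 on ℝ }. Then for every y ∈ ℝ, the interval [−7/2, 1/2] is contained in the subdifferential D⁻S(·,y)(y); that is, for every q ∈ [−7/2, 1/2], one has liminf_{x→y} ( S(x,y) − S(y,y) − q(x − y) ) / |x − y| ≥ 0. -/
open Filter Set
open scoped Topology

noncomputable section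

/-- Viscosity subsolution of `E(x, u(x), u'(x)) = 0` on `ℝ`. -/
def ViscSub1 (E : ℝ → ℝ → ℝ → ℝ) (u : ℝ → ℝ) : Prop :=
  ∀ φ : ℝ → ℝ, ContDiff ℝ 1 φ → ∀ x₀ : ℝ, IsLocalMax (u - φ) x₀ →
    E x₀ (u x₀) (deriv φ x₀) ≤ 0

/-- Viscosity supersolution of `E(x, u(x), u'(x)) = 0` on `ℝ`. -/
def ViscSuper1 (E : ℝ → ℝ → ℝ → ℝ) (u : ℝ → ℝ) : Prop :=
  ∀ φ : ℝ → ℝ, ContDiff ℝ 1 φ → ∀ x₀ : ℝ, IsLocalMin (u - φ) x₀ →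
    0 ≤ E x₀ (u x₀) (deriv φ x₀)

/-- Viscosity solution of `E(x, u(x), u'(x)) = 0` on `ℝ`. -/
def ViscSol1 (E : ℝ → ℝ → ℝ → ℝ) (u : ℝ → ℝ) : Prop :=
  ViscSub1 E u ∧ ViscSuper1 E u

/-- The kinetic energy `F : F(p) = p` on `[0,1]`, `F(p) = 1` on `[1,2]`, `F(p) = p - 1` for `p ≥ 2`. -/
def Fk (p : ℝ) : ℝ := if p ≤ 1 then p else if p ≤ 2 then 1 else p - 1

/-- The 1-periodic potential: `V(x) = x` on `[0,s]`, `V(x) = 2s - x` on `[s,2s]`, `V(x) = 0`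
on `[2s,1]`. -/
def Vs (s x : ℝ) : ℝ :=
  if Int.fract x ≤ s then Int.fract x
  else if Int.fract x ≤ 2 * s then 2 * s - Int.fract x
  else 0

/-- The maximal subsolution with vertex `y`:
`S(x,y) = sup { w(x) - w(y) : w is a 1-periodic continuous viscosity subsolution }`. -/
def maxSub (s y x : ℝ) : ℝ :=
  sSup {t : ℝ | ∃ w : ℝ → ℝ, Continuous w ∧ Function.Periodic w 1 ∧
    ViscSub1 (fun x' _ p => Fk |3 / 2 + p| - Vs s x' - 1) w ∧ t = w x - w y}

/-! ### Auxiliary lemmas -/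

section Aux

set_option maxHeartbeats 1000000

open Real

lemma Vs_nonneg (s x : ℝ) : 0 ≤ Vs s x := by
  have h := Int.fract_nonneg x
  unfold Vs; split_ifs <;> linarith

lemma Vs_le (s x : ℝ) (hs : 0 < s) : Vs s x ≤ s := by
  unfold Vs; split_ifs <;> linarith

lemma Fk_le_one {r : ℝ} (h : r ≤ 2) : Fk r ≤ 1 := by
  unfold Fk; split_ifs <;> linarith

lemma le_of_Fk_le {r : ℝ} (h : Fk r ≤ 6/5) : r ≤ 11/5 := by
  unfold Fk at h; split_ifs at h <;> linarith

/-- criterion: everywhere differentiable with derivative in `[-7/2, 1/2]` gives a subsolution -/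
lemma viscSub_of_deriv (s : ℝ) {w d : ℝ → ℝ} (hw : ∀ x, HasDerivAt w (d x) x)
    (hlo : ∀ x, -(7/2) ≤ d x) (hhi : ∀ x, d x ≤ 1/2) :
    ViscSub1 (fun x' _ p => Fk |3 / 2 + p| - Vs s x' - 1) w := by
  intro φ hφ x₀ hmax
  have hφd : DifferentiableAt ℝ φ x₀ := (hφ.differentiable one_ne_zero).differentiableAt
  have hsub : HasDerivAt (w - φ) (d x₀ - deriv φ x₀) x₀ := (hw x₀).sub hφd.hasDerivAt
  have h0 : deriv (w - φ) x₀ = 0 := hmax.deriv_eq_zero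
  have : d x₀ - deriv φ x₀ = 0 := by rw [← hsub.deriv]; exact h0
  have hd : deriv φ x₀ = d x₀ := by linarith
  simp only [hd]
  have h1 : |3 / 2 + d x₀| ≤ 2 := by
    rw [abs_le]; constructor <;> [linarith [hlo x₀]; linarith [hhi x₀]]
  have := Fk_le_one h1
  have := Vs_nonneg s x₀
  linarith

/-- continuous periodic subsolutions are `4`-Lipschitz -/
lemma sub_lip {s : ℝ} (hs : 0 < s) (hs' : s ≤ 1/5) {w : ℝ → ℝ} (hw : Continuous w)
    (hp : Function.Periodic w 1)
    (hsub : ViscSub1 (fun x' _ p => Fk |3 / 2 + p| - Vs s x' - 1) w) (z y' : ℝ) :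
    w z - w y' ≤ 4 * |z - y'| := by
  by_contra hcon
  push_neg at hcon
  obtain ⟨η, hη, hηeq⟩ : ∃ η : ℝ, 0 < η ∧ w z - w y' - 4 * |z - y'| = 2 * η :=
    ⟨(w z - w y' - 4 * |z - y'|) / 2, by linarith, by ring⟩
  -- continuity at y'
  obtain ⟨δ, hδ, hδc⟩ := Metric.continuousAt_iff.1 (hw.continuousAt (x := y')) η hη
  obtain ⟨ε, hε, hεη, hεδ⟩ : ∃ ε : ℝ, 0 < ε ∧ 4 * ε ≤ η ∧ 4 * ε ≤ δ :=
    ⟨min (η/4) (δ/4), lt_min (by linarith) (by linarith),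
      by have := min_le_left (η/4) (δ/4); linarith,
      by have := min_le_right (η/4) (δ/4); linarith⟩
  -- the test function
  set f : ℝ → ℝ := fun x => (x - y')^2 + ε^2 with hf_def
  have hfpos : ∀ x, 0 < f x := fun x => by positivity
  set ψ : ℝ → ℝ := fun x => 4 * Real.sqrt (f x) with hψ_def
  have hfc : ContDiff ℝ 1 f := by
    apply ContDiff.add _ contDiff_const
    exact (contDiff_id.sub contDiff_const).pow 2
  have hψc : ContDiff ℝ 1 ψ :=
    ContDiff.mul contDiff_const (hfc.sqrt (fun x => (hfpos x).ne'))
  -- bound for w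
  obtain ⟨m, hm, hmax⟩ := (isCompact_Icc (a := (0:ℝ)) (b := 1)).exists_isMaxOn
    (Set.nonempty_Icc.2 zero_le_one) hw.continuousOn
  have hwM : ∀ x, w x ≤ w m := by
    intro x
    have h1 : w x = w (Int.fract x) := by
      have := hp.sub_int_mul_eq (x := x) ⌊x⌋
      simp only [mul_one] at this
      rw [← this]; rfl
    rw [h1]
    exact hmax ⟨Int.fract_nonneg x, (Int.fract_lt_one x).le⟩
  -- ψ - w tends to atTop
  have hco : Tendsto (fun x => ψ x - w x) (cocompact ℝ) atTop := by
    apply tendsto_atTop_mono (f := fun x => 4 * |x| - (4 * |y'| + w m))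
    · intro x
      have h1 : |x - y'| ≤ Real.sqrt (f x) := by
        rw [show |x - y'| = Real.sqrt ((x - y')^2) from (Real.sqrt_sq_eq_abs _).symm]
        apply Real.sqrt_le_sqrt; simp only [hf_def]; nlinarith [sq_nonneg ε]
      have h2 : |x| - |y'| ≤ |x - y'| := by
        have := abs_sub_abs_le_abs_sub x y'; linarith
      have := hwM x
      simp only [hψ_def]; nlinarith
    · apply tendsto_atTop_add_const_right
      have : Tendsto (fun x : ℝ => |x|) (cocompact ℝ) atTop := by
        exact (tendsto_norm_cocompact_atTop (E := ℝ)).congr (fun x => Real.norm_eq_abs x)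
      exact this.const_mul_atTop (by norm_num)
  obtain ⟨x₀, hx₀⟩ := ((hψc.continuous.sub hw).exists_forall_le hco)
  -- x₀ is a local max of w - ψ
  have hloc : IsLocalMax (w - ψ) x₀ := by
    apply Filter.Eventually.of_forall
    intro x; have := hx₀ x; simp only [Pi.sub_apply] at this ⊢; linarith
  have hE := hsub ψ hψc x₀ hloc
  -- compute deriv ψ x₀
  set r : ℝ := Real.sqrt (f x₀) with hr_def
  have hrpos : 0 < r := Real.sqrt_pos.2 (hfpos x₀)
  have hderf : HasDerivAt f (2 * (x₀ - y')) x₀ := by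
    have h1 : HasDerivAt (fun x : ℝ => x - y') 1 x₀ := (hasDerivAt_id x₀).sub_const y'
    have h2 := (h1.pow 2).add_const (ε^2)
    exact h2.congr_deriv (by norm_num)
  have hderψ : HasDerivAt ψ (4 * (x₀ - y') / r) x₀ := by
    have h1 : HasDerivAt (fun x => Real.sqrt (f x)) (1 / (2 * r) * (2 * (x₀ - y'))) x₀ :=
      (Real.hasDerivAt_sqrt (hfpos x₀).ne').comp x₀ hderf
    have h2 := h1.const_mul 4
    exact h2.congr_deriv (by rw [one_div_mul_eq_div, mul_div_mul_left _ _ (two_ne_zero' ℝ), mul_div_assoc])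
  have hderψ' : deriv ψ x₀ = 4 * (x₀ - y') / r := hderψ.deriv
  rw [hderψ'] at hE
  -- deduce |x₀ - y'| small
  have hVs := Vs_le s x₀ hs
  have hFk : Fk |3 / 2 + 4 * (x₀ - y') / r| ≤ 6/5 := by linarith
  have habs : |3 / 2 + 4 * (x₀ - y') / r| ≤ 11/5 := le_of_Fk_le hFk
  have hD : |4 * (x₀ - y') / r| ≤ 37/10 := by
    rw [abs_le] at habs ⊢
    constructor <;> [linarith [habs.1]; linarith [habs.2]]
  have hD2 : 4 * |x₀ - y'| ≤ (37/10) * r := by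
    rw [abs_div, abs_of_pos hrpos, div_le_iff₀ hrpos] at hD
    calc 4 * |x₀ - y'| = |4 * (x₀ - y')| := by rw [abs_mul]; norm_num
      _ ≤ 37/10 * r := hD
  -- |x₀ - y'| is small
  have hr2 : r^2 = (x₀ - y')^2 + ε^2 := by
    rw [hr_def, Real.sq_sqrt (hfpos x₀).le]
  have h3ε : |x₀ - y'| ≤ 3 * ε := by
    nlinarith [hD2, hr2, sq_abs (x₀ - y'), abs_nonneg (x₀ - y'), hε.le, hrpos.le,
      mul_pos hε hε]
  have hclose : dist (w x₀) (w y') < η := by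
    apply hδc
    rw [Real.dist_eq]
    linarith
  have hwx₀ : w x₀ < w y' + η := by
    rw [Real.dist_eq, abs_lt] at hclose
    linarith [hclose.2]
  -- lower bound for w x₀ from maximality
  have hA := hx₀ z
  have hψz : ψ z ≤ 4 * |z - y'| + 4 * ε := by
    have h1 : Real.sqrt (f z) ≤ |z - y'| + ε := by
      have h2 : f z ≤ (|z - y'| + ε)^2 := by
        simp only [hf_def]
        nlinarith [sq_abs (z - y'), mul_nonneg (abs_nonneg (z - y')) hε.le]
      have h := Real.sqrt_le_sqrt h2
      rwa [Real.sqrt_sq (by positivity)] at h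
    simp only [hψ_def]; linarith
  have hψx₀ : 4 * ε ≤ ψ x₀ := by
    have h1 : ε ≤ Real.sqrt (f x₀) := by
      have h2 : ε^2 ≤ f x₀ := by simp only [hf_def]; nlinarith [sq_nonneg (x₀ - y')]
      have h := Real.sqrt_le_sqrt h2
      rwa [Real.sqrt_sq hε.le] at h
    simp only [hψ_def]; linarith
  -- contradiction
  have : w y' + 2 * η ≤ w x₀ := by
    have : w z - 4 * |z - y'| = w y' + 2 * η := by linarith
    simp only [Pi.sub_apply] at hA; linarith
  linarith

/-! The Fejér-kernel positivity lemma. -/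

lemma cospair (k l m : ℝ) (θ : ℝ) (h : k - l = m) :
    Real.cos (k*θ) * Real.cos (l*θ) + Real.sin (k*θ) * Real.sin (l*θ) = Real.cos (m*θ) := by
  rw [← Real.cos_sub, ← sub_mul, h]

lemma fejer (θ : ℝ) : -(1/2 : ℝ) ≤ 7/8 * Real.cos (1*θ) + 6/8 * Real.cos (2*θ)
    + 5/8 * Real.cos (3*θ) + 4/8 * Real.cos (4*θ) + 3/8 * Real.cos (5*θ)
    + 2/8 * Real.cos (6*θ) + 1/8 * Real.cos (7*θ) := by
  have h21 := cospair 2 1 1 θ (by norm_num)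
  have h31 := cospair 3 1 2 θ (by norm_num)
  have h41 := cospair 4 1 3 θ (by norm_num)
  have h51 := cospair 5 1 4 θ (by norm_num)
  have h61 := cospair 6 1 5 θ (by norm_num)
  have h71 := cospair 7 1 6 θ (by norm_num)
  have h32 := cospair 3 2 1 θ (by norm_num)
  have h42 := cospair 4 2 2 θ (by norm_num)
  have h52 := cospair 5 2 3 θ (by norm_num)
  have h62 := cospair 6 2 4 θ (by norm_num)
  have h72 := cospair 7 2 5 θ (by norm_num)
  have h43 := cospair 4 3 1 θ (by norm_num)
  have h53 := cospair 5 3 2 θ (by norm_num)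
  have h63 := cospair 6 3 3 θ (by norm_num)
  have h73 := cospair 7 3 4 θ (by norm_num)
  have h54 := cospair 5 4 1 θ (by norm_num)
  have h64 := cospair 6 4 2 θ (by norm_num)
  have h74 := cospair 7 4 3 θ (by norm_num)
  have h65 := cospair 6 5 1 θ (by norm_num)
  have h75 := cospair 7 5 2 θ (by norm_num)
  have h76 := cospair 7 6 1 θ (by norm_num)
  have p1 := Real.sin_sq_add_cos_sq (1*θ)
  have p2 := Real.sin_sq_add_cos_sq (2*θ)
  have p3 := Real.sin_sq_add_cos_sq (3*θ)
  have p4 := Real.sin_sq_add_cos_sq (4*θ)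
  have p5 := Real.sin_sq_add_cos_sq (5*θ)
  have p6 := Real.sin_sq_add_cos_sq (6*θ)
  have p7 := Real.sin_sq_add_cos_sq (7*θ)
  have key : (1 + Real.cos (1*θ) + Real.cos (2*θ) + Real.cos (3*θ) + Real.cos (4*θ)
        + Real.cos (5*θ) + Real.cos (6*θ) + Real.cos (7*θ))^2
      + (Real.sin (1*θ) + Real.sin (2*θ) + Real.sin (3*θ) + Real.sin (4*θ)
        + Real.sin (5*θ) + Real.sin (6*θ) + Real.sin (7*θ))^2
      = 8 + 14 * Real.cos (1*θ) + 12 * Real.cos (2*θ) + 10 * Real.cos (3*θ)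
        + 8 * Real.cos (4*θ) + 6 * Real.cos (5*θ) + 4 * Real.cos (6*θ)
        + 2 * Real.cos (7*θ) := by
    linear_combination 2*h21 + 2*h31 + 2*h41 + 2*h51 + 2*h61 + 2*h71 + 2*h32 + 2*h42
      + 2*h52 + 2*h62 + 2*h72 + 2*h43 + 2*h53 + 2*h63 + 2*h73 + 2*h54 + 2*h64 + 2*h74
      + 2*h65 + 2*h75 + 2*h76 + p1 + p2 + p3 + p4 + p5 + p6 + p7
  linarith [key, sq_nonneg (1 + Real.cos (1*θ) + Real.cos (2*θ) + Real.cos (3*θ)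
      + Real.cos (4*θ) + Real.cos (5*θ) + Real.cos (6*θ) + Real.cos (7*θ)),
    sq_nonneg (Real.sin (1*θ) + Real.sin (2*θ) + Real.sin (3*θ) + Real.sin (4*θ)
      + Real.sin (5*θ) + Real.sin (6*θ) + Real.sin (7*θ))]

/-! The two explicit smooth periodic subsolutions. -/

lemma sin_term_deriv (a y x : ℝ) :
    HasDerivAt (fun x => Real.sin (a * (2*π*(x - y)))) (a * (2*π) * Real.cos (a * (2*π*(x - y)))) x := by
  have h1 : HasDerivAt (fun x : ℝ => a * (2*π*(x - y))) (a * (2*π)) x := by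
    simpa using (((hasDerivAt_id x).sub_const y).const_mul (2*π)).const_mul a
  have h2 := (Real.hasDerivAt_sin (a * (2*π*(x - y)))).comp x h1
  exact h2.congr_deriv (by ring)

lemma sin_shift (u : ℝ) (j : ℕ) : Real.sin (u + j*(2*π)) = Real.sin u := by
  have := Real.sin_add_int_mul_two_pi u j
  exact_mod_cast this

def Wp (y x : ℝ) : ℝ := Real.sin (1*(2*π*(x - y))) / (4*π)

def dWp (y x : ℝ) : ℝ := Real.cos (1*(2*π*(x - y))) / 2

def Wm (y x : ℝ) : ℝ :=
  -(7/(16*π) * Real.sin (1*(2*π*(x - y))) + 6/(32*π) * Real.sin (2*(2*π*(x - y)))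
    + 5/(48*π) * Real.sin (3*(2*π*(x - y))) + 4/(64*π) * Real.sin (4*(2*π*(x - y)))
    + 3/(80*π) * Real.sin (5*(2*π*(x - y))) + 2/(96*π) * Real.sin (6*(2*π*(x - y)))
    + 1/(112*π) * Real.sin (7*(2*π*(x - y))))

def dWm (y x : ℝ) : ℝ :=
  -(7/8 * Real.cos (1*(2*π*(x - y))) + 6/8 * Real.cos (2*(2*π*(x - y)))
    + 5/8 * Real.cos (3*(2*π*(x - y))) + 4/8 * Real.cos (4*(2*π*(x - y)))
    + 3/8 * Real.cos (5*(2*π*(x - y))) + 2/8 * Real.cos (6*(2*π*(x - y)))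
    + 1/8 * Real.cos (7*(2*π*(x - y))))

lemma Wp_deriv (y x : ℝ) : HasDerivAt (Wp y) (dWp y x) x := by
  have h := (sin_term_deriv 1 y x).div_const (4*π)
  have hπ := Real.pi_ne_zero
  unfold Wp dWp
  exact h.congr_deriv (by rw [div_eq_div_iff (by positivity) (by norm_num)]; ring)

lemma Wm_deriv (y x : ℝ) : HasDerivAt (Wm y) (dWm y x) x := by
  have h1 := (sin_term_deriv 1 y x).const_mul (7/(16*π))
  have h2 := (sin_term_deriv 2 y x).const_mul (6/(32*π))
  have h3 := (sin_term_deriv 3 y x).const_mul (5/(48*π))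
  have h4 := (sin_term_deriv 4 y x).const_mul (4/(64*π))
  have h5 := (sin_term_deriv 5 y x).const_mul (3/(80*π))
  have h6 := (sin_term_deriv 6 y x).const_mul (2/(96*π))
  have h7 := (sin_term_deriv 7 y x).const_mul (1/(112*π))
  have H := ((((((h1.add h2).add h3).add h4).add h5).add h6).add h7).neg
  have hπ := Real.pi_ne_zero
  unfold Wm dWm
  exact H.congr_deriv (by field_simp; ring)

lemma Wp_cont (y : ℝ) : Continuous (Wp y) := by
  unfold Wp; fun_prop

lemma Wm_cont (y : ℝ) : Continuous (Wm y) := by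
  unfold Wm; fun_prop

lemma Wp_periodic (y : ℝ) : Function.Periodic (Wp y) 1 := by
  intro x
  unfold Wp
  rw [show (1:ℝ)*(2*π*(x + 1 - y)) = 1*(2*π*(x - y)) + (1:ℕ)*(2*π) by push_cast; ring,
    sin_shift]

lemma Wm_periodic (y : ℝ) : Function.Periodic (Wm y) 1 := by
  intro x
  unfold Wm
  rw [show (1:ℝ)*(2*π*(x + 1 - y)) = 1*(2*π*(x - y)) + (1:ℕ)*(2*π) by push_cast; ring,
    sin_shift,
    show (2:ℝ)*(2*π*(x + 1 - y)) = 2*(2*π*(x - y)) + (2:ℕ)*(2*π) by push_cast; ring,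
    sin_shift,
    show (3:ℝ)*(2*π*(x + 1 - y)) = 3*(2*π*(x - y)) + (3:ℕ)*(2*π) by push_cast; ring,
    sin_shift,
    show (4:ℝ)*(2*π*(x + 1 - y)) = 4*(2*π*(x - y)) + (4:ℕ)*(2*π) by push_cast; ring,
    sin_shift,
    show (5:ℝ)*(2*π*(x + 1 - y)) = 5*(2*π*(x - y)) + (5:ℕ)*(2*π) by push_cast; ring,
    sin_shift,
    show (6:ℝ)*(2*π*(x + 1 - y)) = 6*(2*π*(x - y)) + (6:ℕ)*(2*π) by push_cast; ring,
    sin_shift,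
    show (7:ℝ)*(2*π*(x + 1 - y)) = 7*(2*π*(x - y)) + (7:ℕ)*(2*π) by push_cast; ring,
    sin_shift]

lemma dWp_lo (y x : ℝ) : -(7/2) ≤ dWp y x := by
  unfold dWp
  have := Real.neg_one_le_cos (1*(2*π*(x - y)))
  linarith

lemma dWp_hi (y x : ℝ) : dWp y x ≤ 1/2 := by
  unfold dWp
  have := Real.cos_le_one (1*(2*π*(x - y)))
  linarith

lemma dWm_lo (y x : ℝ) : -(7/2) ≤ dWm y x := by
  unfold dWm
  have c1 := Real.cos_le_one (1*(2*π*(x - y)))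
  have c2 := Real.cos_le_one (2*(2*π*(x - y)))
  have c3 := Real.cos_le_one (3*(2*π*(x - y)))
  have c4 := Real.cos_le_one (4*(2*π*(x - y)))
  have c5 := Real.cos_le_one (5*(2*π*(x - y)))
  have c6 := Real.cos_le_one (6*(2*π*(x - y)))
  have c7 := Real.cos_le_one (7*(2*π*(x - y)))
  linarith

lemma dWm_hi (y x : ℝ) : dWm y x ≤ 1/2 := by
  unfold dWm
  have := fejer (2*π*(x - y))
  linarith

lemma dWp_at (y : ℝ) : dWp y y = 1/2 := by
  unfold dWp
  simp

lemma dWm_at (y : ℝ) : dWm y y = -(7/2) := by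
  unfold dWm
  norm_num

end Aux

/-- `[-7/2, 1/2] ⊆ D⁻ S(⋅,y)(y)`, where the subdifferential condition
`liminf_{x→y} (S(x,y) - S(y,y) - q (x-y))/|x-y| ≥ 0` is spelled out as:
for every `c < 0`, eventually near `y` (with `x ≠ y`) the difference quotient is `≥ c`. -/
theorem stmt11 (s : ℝ) (hs : 0 < s) (hs' : s ≤ 1 / 5) (y : ℝ) :
    ∀ q ∈ Set.Icc (-(7 : ℝ) / 2) (1 / 2), ∀ c : ℝ, c < 0 →
      ∀ᶠ x in 𝓝[≠] y, c ≤ (maxSub s y x - maxSub s y y - q * (x - y)) / |x - y| := by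
  intro q hq c hc
  obtain ⟨hq1, hq2⟩ := hq
  -- boundedness of the defining sets
  have bdd : ∀ x : ℝ, BddAbove {t : ℝ | ∃ w : ℝ → ℝ, Continuous w ∧ Function.Periodic w 1 ∧
      ViscSub1 (fun x' _ p => Fk |3 / 2 + p| - Vs s x' - 1) w ∧ t = w x - w y} := by
    intro x
    refine ⟨4 * |x - y|, ?_⟩
    rintro t ⟨w, hw, hp, hsub, rfl⟩
    exact sub_lip hs hs' hw hp hsub x y
  -- the zero function is a subsolution
  have h0sub : ViscSub1 (fun x' _ p => Fk |3 / 2 + p| - Vs s x' - 1) (fun _ => (0:ℝ)) := by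
    have : ∀ x : ℝ, HasDerivAt (fun _ : ℝ => (0:ℝ)) ((fun _ : ℝ => (0:ℝ)) x) x :=
      fun x => hasDerivAt_const x 0
    exact viscSub_of_deriv s this (fun _ => by norm_num) (fun _ => by norm_num)
  -- maxSub s y y = 0
  have hSyy : maxSub s y y = 0 := by
    unfold maxSub
    apply le_antisymm
    · apply Real.sSup_le
      · rintro t ⟨w, hw, hp, hsub, rfl⟩
        simp
      · exact le_rfl
    · apply le_csSup (bdd y)
      exact ⟨fun _ => 0, continuous_const, fun _ => rfl, h0sub, by simp⟩
  -- maxSub dominates our explicit subsolutions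
  have hWpsub : ViscSub1 (fun x' _ p => Fk |3 / 2 + p| - Vs s x' - 1) (Wp y) :=
    viscSub_of_deriv s (Wp_deriv y) (dWp_lo y) (dWp_hi y)
  have hWmsub : ViscSub1 (fun x' _ p => Fk |3 / 2 + p| - Vs s x' - 1) (Wm y) :=
    viscSub_of_deriv s (Wm_deriv y) (dWm_lo y) (dWm_hi y)
  have hleP : ∀ x : ℝ, Wp y x - Wp y y ≤ maxSub s y x := by
    intro x
    exact le_csSup (bdd x) ⟨Wp y, Wp_cont y, Wp_periodic y, hWpsub, rfl⟩
  have hleM : ∀ x : ℝ, Wm y x - Wm y y ≤ maxSub s y x := by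
    intro x
    exact le_csSup (bdd x) ⟨Wm y, Wm_cont y, Wm_periodic y, hWmsub, rfl⟩
  -- slopes converge to the derivatives at y
  have hsP : Tendsto (slope (Wp y) y) (𝓝[≠] y) (𝓝 (1/2)) := by
    have h := Wp_deriv y y
    rw [dWp_at y] at h
    exact hasDerivAt_iff_tendsto_slope.1 h
  have hsM : Tendsto (slope (Wm y) y) (𝓝[≠] y) (𝓝 (-(7/2))) := by
    have h := Wm_deriv y y
    rw [dWm_at y] at h
    exact hasDerivAt_iff_tendsto_slope.1 h
  have ev1 : ∀ᶠ x in 𝓝[≠] y, 1/2 + c < slope (Wp y) y x :=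
    hsP.eventually (eventually_gt_nhds (by linarith))
  have ev2 : ∀ᶠ x in 𝓝[≠] y, slope (Wm y) y x < -(7/2) - c :=
    hsM.eventually (eventually_lt_nhds (by linarith))
  filter_upwards [ev1, ev2, self_mem_nhdsWithin] with x h1 h2 hx
  have hxy : x ≠ y := hx
  rw [hSyy]
  have habs : 0 < |x - y| := abs_pos.2 (sub_ne_zero.2 hxy)
  rw [le_div_iff₀ habs]
  rcases hxy.lt_or_gt with hlt | hgt
  · -- x < y : use Wm
    have hS := hleM x
    rw [slope_def_field] at h2
    rw [div_lt_iff_of_neg (by linarith : x - y < 0)] at h2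
    rw [abs_of_neg (by linarith : x - y < 0)]
    nlinarith [mul_nonneg (by linarith : (0:ℝ) ≤ y - x) (by linarith : (0:ℝ) ≤ q + 7/2)]
  · -- x > y : use Wp
    have hS := hleP x
    rw [slope_def_field] at h1
    rw [lt_div_iff₀ (by linarith : (0:ℝ) < x - y)] at h1
    rw [abs_of_pos (by linarith : (0:ℝ) < x - y)]
    nlinarith [mul_nonneg (by linarith : (0:ℝ) ≤ x - y) (by linarith : (0:ℝ) ≤ 1/2 - q)]
end
end

section
/- Let 0 < s ≤ 1/5 and set b = 4s + 2s². Let u⁰ : ℝ → ℝ be the continuous 1-periodic function with u⁰(0) = 0, (u⁰)'(x) = 1/2 + V(x) for x ∈ (0, 2s), (u⁰)'(x) = −1/2 for x ∈ (2s, b), and u⁰(x) = 0 for x ∈ [b, 1]. Then b < 1, u⁰ is well defined (in particular u⁰(b) = 0), and u⁰ is a viscosity solution of F(|3/2 + (u⁰)'(x)|) − V(x) = 1 on 𝕋. -/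
open Filter Set
open scoped Topology

noncomputable section

lemma hasDerivAt_mul_abs (c : ℝ) : HasDerivAt (fun t : ℝ => t * |t|) (2 * |c|) c := by
  rcases lt_trichotomy c 0 with hc | hc | hc
  · have h : HasDerivAt (fun t : ℝ => -(t * t)) (2 * |c|) c := by
      have := ((hasDerivAt_id c).mul (hasDerivAt_id c)).neg
      simp only [id] at this
      refine this.congr_deriv ?_
      rw [abs_of_neg hc]; ring
    apply h.congr_of_eventuallyEq
    filter_upwards [Iio_mem_nhds hc] with t (ht : t < 0)
    rw [abs_of_neg ht]; ring
  · subst hc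
    rw [hasDerivAt_iff_tendsto_slope]
    have : (2 : ℝ) * |0| = 0 := by simp
    rw [this]
    have h2 : Tendsto (fun t : ℝ => |t|) (𝓝[≠] (0:ℝ)) (𝓝 0) := by
      have : Tendsto (fun t : ℝ => |t|) (𝓝 (0:ℝ)) (𝓝 |0|) := continuous_abs.continuousAt
      simpa using this.mono_left nhdsWithin_le_nhds
    apply h2.congr'
    filter_upwards [eventually_mem_nhdsWithin] with t (ht : t ∈ ({0}ᶜ : Set ℝ))
    have ht' : t ≠ 0 := ht
    rw [slope_def_field]
    field_simp
    simp
  · have h : HasDerivAt (fun t : ℝ => t * t) (2 * |c|) c := by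
      have := (hasDerivAt_id c).mul (hasDerivAt_id c)
      simp only [id] at this
      refine this.congr_deriv ?_
      rw [abs_of_pos hc]; ring
    apply h.congr_of_eventuallyEq
    filter_upwards [Ioi_mem_nhds hc] with t (ht : 0 < t)
    rw [abs_of_pos ht]

lemma max_right {g : ℝ → ℝ} {x₀ d : ℝ}
    (h : IsLocalMax g x₀) (hd : HasDerivWithinAt g d (Ici x₀) x₀) : d ≤ 0 := by
  rw [hasDerivWithinAt_iff_tendsto_slope, Set.Ici_sdiff_left] at hd
  refine le_of_tendsto hd ?_
  filter_upwards [h.filter_mono nhdsWithin_le_nhds, eventually_mem_nhdsWithin] with t hle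
    (ht : t ∈ Ioi x₀)
  rw [slope_def_field]
  apply div_nonpos_of_nonpos_of_nonneg
  · exact sub_nonpos.2 hle
  · exact sub_nonneg.2 (le_of_lt ht)

lemma max_left {g : ℝ → ℝ} {x₀ d : ℝ}
    (h : IsLocalMax g x₀) (hd : HasDerivWithinAt g d (Iic x₀) x₀) : 0 ≤ d := by
  rw [hasDerivWithinAt_iff_tendsto_slope, Set.Iic_diff_right] at hd
  refine ge_of_tendsto hd ?_
  filter_upwards [h.filter_mono nhdsWithin_le_nhds, eventually_mem_nhdsWithin] with t hle
    (ht : t ∈ Iio x₀)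
  rw [slope_def_field]
  have h1 : g t - g x₀ ≤ 0 := sub_nonpos.2 hle
  have h2 : t - x₀ < 0 := sub_neg.2 ht
  rw [div_nonneg_iff]
  right; exact ⟨h1, le_of_lt h2⟩

lemma min_right {g : ℝ → ℝ} {x₀ d : ℝ}
    (h : IsLocalMin g x₀) (hd : HasDerivWithinAt g d (Ici x₀) x₀) : 0 ≤ d := by
  have := max_right h.neg hd.neg
  linarith

lemma min_left {g : ℝ → ℝ} {x₀ d : ℝ}
    (h : IsLocalMin g x₀) (hd : HasDerivWithinAt g d (Iic x₀) x₀) : d ≤ 0 := by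
  have := max_left h.neg hd.neg
  linarith

noncomputable def P1 (s y : ℝ) : ℝ := y / 2 + s * y - (s ^ 2 + (y - s) * |y - s|) / 2
noncomputable def P2 (s y : ℝ) : ℝ := 2 * s + s ^ 2 - y / 2
noncomputable def f0 (s b y : ℝ) : ℝ := if y ≤ 2 * s then P1 s y else if y ≤ b then P2 s y else 0
noncomputable def U (s b x : ℝ) : ℝ := f0 s b (Int.fract x)

lemma Fk_eq_one {p : ℝ} (h1 : 1 ≤ p) (h2 : p ≤ 2) : Fk p = 1 := by
  unfold Fk; split_ifs with h h' <;> linarith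

lemma Fk_two_add {v : ℝ} (hv : 0 ≤ v) : Fk (2 + v) = 1 + v := by
  unfold Fk; split_ifs with h h' <;> linarith

lemma Vs_eq_of_le {s : ℝ} (x : ℝ) (h : Int.fract x ≤ 2 * s) :
    Vs s x = s - |Int.fract x - s| := by
  unfold Vs
  rcases le_or_gt (Int.fract x) s with h' | h'
  · rw [if_pos h', abs_of_nonpos (by linarith)]; ring
  · rw [if_neg (not_le.2 h'), if_pos h, abs_of_pos (by linarith)]; ring

lemma Vs_eq_zero {s : ℝ} (x : ℝ) (hs : 0 < s) (h : 2 * s ≤ Int.fract x) : Vs s x = 0 := by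
  unfold Vs
  split_ifs with h1 h2
  · linarith
  · linarith
  · rfl

lemma fract_eq (n : ℤ) (x : ℝ) (h1 : (n : ℝ) ≤ x) (h2 : x < n + 1) : Int.fract x = x - n := by
  have hf : ⌊x⌋ = n := Int.floor_eq_iff.2 ⟨h1, h2⟩
  rw [Int.fract, hf]

lemma P1_zero {s : ℝ} (hs : 0 ≤ s) : P1 s 0 = 0 := by
  unfold P1
  rw [zero_sub, abs_neg, abs_of_nonneg hs]; ring

lemma P1_glue (s : ℝ) (hs : 0 ≤ s) : P1 s (2 * s) = P2 s (2 * s) := by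
  unfold P1 P2
  have : |2 * s - s| = s := by rw [abs_of_nonneg (by linarith)]; ring
  rw [this]; ring

lemma P2_b {s b : ℝ} (hb : b = 4 * s + 2 * s ^ 2) : P2 s b = 0 := by
  unfold P2; rw [hb]; ring

lemma hasDerivAt_P1shift (s c y : ℝ) :
    HasDerivAt (fun x => P1 s (x - c)) (1 / 2 + s - |y - c - s|) y := by
  have habs : HasDerivAt (fun x : ℝ => (x - c - s) * |x - c - s|) (2 * |y - c - s|) y := by
    have := (hasDerivAt_mul_abs (y - c - s)).comp y (((hasDerivAt_id y).sub_const c).sub_const s)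
    exact this.congr_deriv (mul_one _)
  have hA := ((hasDerivAt_id y).sub_const c).div_const 2
  have hB := (((hasDerivAt_id y).sub_const c).const_mul s)
  have hC := ((hasDerivAt_const y (s ^ 2)).add habs).div_const 2
  have h := (hA.add hB).sub hC
  simp only [id] at h hA hB hC
  unfold P1
  refine h.congr_deriv ?_
  ring

lemma hasDerivAt_P2shift (s c y : ℝ) :
    HasDerivAt (fun x => P2 s (x - c)) (-(1 : ℝ) / 2) y := by
  have h := (hasDerivAt_const y (2 * s + s ^ 2)).sub (((hasDerivAt_id y).sub_const c).div_const 2)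
  simp only [id] at h
  unfold P2
  refine h.congr_deriv ?_
  norm_num

lemma U_eq_P1 {s b : ℝ} (h2s : 2 * s < 1) (n : ℤ) {x : ℝ} (h1 : (n : ℝ) ≤ x)
    (h2 : x - n ≤ 2 * s) : U s b x = P1 s (x - n) := by
  have hf : Int.fract x = x - n := fract_eq n x h1 (by linarith)
  unfold U f0; rw [hf, if_pos h2]

lemma U_eq_P2 {s b : ℝ} (hs : 0 < s) (hb1 : b < 1) (n : ℤ) {x : ℝ} (h1 : 2 * s < x - n)
    (h2 : x - n ≤ b) : U s b x = P2 s (x - n) := by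
  have hf : Int.fract x = x - n := fract_eq n x (by linarith) (by linarith)
  unfold U f0; rw [hf, if_neg (not_le.2 h1), if_pos h2]

lemma U_eq_zero {s b : ℝ} (hs : 0 < s) (h2sb : 2 * s < b) (n : ℤ) {x : ℝ} (h1 : b < x - n)
    (h2 : x - n < 1) : U s b x = 0 := by
  have hf : Int.fract x = x - n := fract_eq n x (by linarith) (by linarith)
  unfold U f0
  rw [hf, if_neg (by push_neg; linarith), if_neg (not_le.2 h1)]

section LocalStructure

variable {s b : ℝ}

lemma U_int {s b : ℝ} (hs : 0 < s) (n : ℤ) : U s b (n : ℝ) = 0 := by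
  unfold U
  rw [Int.fract_intCast]
  unfold f0
  rw [if_pos (by linarith : (0 : ℝ) ≤ 2 * s)]
  exact P1_zero hs.le

lemma U_eq_P2' (hs : 0 < s) (h2s1 : 2 * s < 1) (hb1 : b < 1) (n : ℤ) {x : ℝ}
    (h1 : 2 * s ≤ x - n) (h2 : x - n ≤ b) : U s b x = P2 s (x - n) := by
  rcases h1.eq_or_lt with heq | hlt
  · rw [U_eq_P1 h2s1 n (by linarith) (le_of_eq heq.symm), ← heq, P1_glue s hs.le]
  · exact U_eq_P2 hs hb1 n hlt h2

lemma U_eq_zero' (hs : 0 < s) (h2s1 : 2 * s < 1) (h2sb : 2 * s < b) (hb1 : b < 1)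
    (hb : b = 4 * s + 2 * s ^ 2) (n : ℤ) {x : ℝ}
    (h1 : b ≤ x - n) (h2 : x - n < 1) : U s b x = 0 := by
  rcases h1.eq_or_lt with heq | hlt
  · rw [U_eq_P2' hs h2s1 hb1 n (by linarith) (le_of_eq heq.symm), ← heq, P2_b hb]
  · exact U_eq_zero hs h2sb n hlt h2

lemma loc_A (hs : 0 < s) (h2s1 : 2 * s < 1) (n : ℤ) {x₀ : ℝ} (h1 : (n : ℝ) < x₀)
    (h2 : x₀ - n < 2 * s) : HasDerivAt (U s b) (1 / 2 + s - |x₀ - n - s|) x₀ := by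
  apply (hasDerivAt_P1shift s n x₀).congr_of_eventuallyEq
  filter_upwards [Ioo_mem_nhds h1 (by linarith : x₀ < (n : ℝ) + 2 * s)] with x hx
  exact U_eq_P1 h2s1 n hx.1.le (by linarith [hx.2])

lemma loc_B (hs : 0 < s) (hb1 : b < 1) (n : ℤ) {x₀ : ℝ} (h1 : 2 * s < x₀ - n)
    (h2 : x₀ - n < b) : HasDerivAt (U s b) (-(1 : ℝ) / 2) x₀ := by
  apply (hasDerivAt_P2shift s n x₀).congr_of_eventuallyEq
  filter_upwards [Ioo_mem_nhds (by linarith : (n : ℝ) + 2 * s < x₀)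
    (by linarith : x₀ < (n : ℝ) + b)] with x hx
  exact U_eq_P2 hs hb1 n (by linarith [hx.1]) (by linarith [hx.2])

lemma loc_C (hs : 0 < s) (h2sb : 2 * s < b) (n : ℤ) {x₀ : ℝ} (h1 : b < x₀ - n)
    (h2 : x₀ - n < 1) : HasDerivAt (U s b) 0 x₀ := by
  apply (hasDerivAt_const x₀ (0 : ℝ)).congr_of_eventuallyEq
  filter_upwards [Ioo_mem_nhds (by linarith : (n : ℝ) + b < x₀)
    (by linarith : x₀ < (n : ℝ) + 1)] with x hx
  exact U_eq_zero hs h2sb n (by linarith [hx.1]) (by linarith [hx.2])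

lemma loc_D_left (hs : 0 < s) (h2s1 : 2 * s < 1) (h2sb : 2 * s < b) (hb1 : b < 1)
    (hb : b = 4 * s + 2 * s ^ 2) (n : ℤ) :
    HasDerivWithinAt (U s b) 0 (Iic (n : ℝ)) (n : ℝ) := by
  apply ((hasDerivAt_const ((n : ℝ)) (0 : ℝ)).hasDerivWithinAt
    (s := Iic (n : ℝ))).congr_of_eventuallyEq
  · filter_upwards [Ioc_mem_nhdsLE_of_mem (⟨by linarith, le_rfl⟩ :
      (n : ℝ) ∈ Ioc ((n : ℝ) - 1 + b) (n : ℝ))] with x hx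
    rcases hx.2.eq_or_lt with heq | hlt
    · rw [heq]; exact U_int hs n
    · have h2 : x - ((n : ℤ) - 1 : ℤ) < 1 := by push_cast; linarith
      have h1 : b ≤ x - ((n : ℤ) - 1 : ℤ) := by push_cast; linarith [hx.1]
      exact U_eq_zero' hs h2s1 h2sb hb1 hb (n - 1) h1 h2
  · exact U_int hs n

lemma loc_D_right (hs : 0 < s) (h2s1 : 2 * s < 1) (n : ℤ) :
    HasDerivWithinAt (U s b) (1 / 2) (Ici (n : ℝ)) (n : ℝ) := by
  have key : HasDerivWithinAt (U s b) (1 / 2 + s - |(n : ℝ) - n - s|) (Ici (n : ℝ)) n := by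
    apply ((hasDerivAt_P1shift s n (n : ℝ)).hasDerivWithinAt).congr_of_eventuallyEq
    · filter_upwards [Ico_mem_nhdsGE_of_mem (⟨le_rfl, by linarith⟩ :
        (n : ℝ) ∈ Ico (n : ℝ) ((n : ℝ) + 2 * s))] with x hx
      exact U_eq_P1 h2s1 n hx.1 (by linarith [hx.2])
    · exact U_eq_P1 h2s1 n le_rfl (by linarith)
  have : (1 : ℝ) / 2 + s - |(n : ℝ) - n - s| = 1 / 2 := by
    rw [show ((n : ℝ) - n - s) = -s by ring, abs_neg, abs_of_nonneg hs.le]; ring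
  rwa [this] at key

lemma loc_E_left (hs : 0 < s) (h2s1 : 2 * s < 1) (n : ℤ) :
    HasDerivWithinAt (U s b) (1 / 2) (Iic ((n : ℝ) + 2 * s)) ((n : ℝ) + 2 * s) := by
  have key : HasDerivWithinAt (U s b) (1 / 2 + s - |(n : ℝ) + 2 * s - n - s|)
      (Iic ((n : ℝ) + 2 * s)) ((n : ℝ) + 2 * s) := by
    apply ((hasDerivAt_P1shift s n ((n : ℝ) + 2 * s)).hasDerivWithinAt).congr_of_eventuallyEq
    · filter_upwards [Ioc_mem_nhdsLE_of_mem (⟨by linarith, le_rfl⟩ :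
        (n : ℝ) + 2 * s ∈ Ioc (n : ℝ) ((n : ℝ) + 2 * s))] with x hx
      exact U_eq_P1 h2s1 n hx.1.le (by linarith [hx.2])
    · exact U_eq_P1 h2s1 n (by linarith) (by linarith)
  have : (1 : ℝ) / 2 + s - |(n : ℝ) + 2 * s - n - s| = 1 / 2 := by
    rw [show ((n : ℝ) + 2 * s - n - s) = s by ring, abs_of_nonneg hs.le]; ring
  rwa [this] at key

lemma loc_E_right (hs : 0 < s) (h2s1 : 2 * s < 1) (h2sb : 2 * s < b) (hb1 : b < 1) (n : ℤ) :
    HasDerivWithinAt (U s b) (-(1 : ℝ) / 2) (Ici ((n : ℝ) + 2 * s)) ((n : ℝ) + 2 * s) := by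
  apply ((hasDerivAt_P2shift s n ((n : ℝ) + 2 * s)).hasDerivWithinAt).congr_of_eventuallyEq
  · filter_upwards [Ico_mem_nhdsGE_of_mem (⟨le_rfl, by linarith⟩ :
      (n : ℝ) + 2 * s ∈ Ico ((n : ℝ) + 2 * s) ((n : ℝ) + b))] with x hx
    exact U_eq_P2' hs h2s1 hb1 n (by linarith [hx.1]) (by linarith [hx.2])
  · exact U_eq_P2' hs h2s1 hb1 n (by linarith) (by linarith)

lemma loc_F_left (hs : 0 < s) (h2s1 : 2 * s < 1) (h2sb : 2 * s < b) (hb1 : b < 1) (n : ℤ) :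
    HasDerivWithinAt (U s b) (-(1 : ℝ) / 2) (Iic ((n : ℝ) + b)) ((n : ℝ) + b) := by
  apply ((hasDerivAt_P2shift s n ((n : ℝ) + b)).hasDerivWithinAt).congr_of_eventuallyEq
  · filter_upwards [Ioc_mem_nhdsLE_of_mem (⟨by linarith, le_rfl⟩ :
      (n : ℝ) + b ∈ Ioc ((n : ℝ) + 2 * s) ((n : ℝ) + b))] with x hx
    exact U_eq_P2 hs hb1 n (by linarith [hx.1]) (by linarith [hx.2])
  · exact U_eq_P2 hs hb1 n (by linarith) (by linarith)

lemma loc_F_right (hs : 0 < s) (h2s1 : 2 * s < 1) (h2sb : 2 * s < b) (hb1 : b < 1)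
    (hb : b = 4 * s + 2 * s ^ 2) (n : ℤ) :
    HasDerivWithinAt (U s b) 0 (Ici ((n : ℝ) + b)) ((n : ℝ) + b) := by
  apply ((hasDerivAt_const ((n : ℝ) + b) (0 : ℝ)).hasDerivWithinAt
    (s := Ici ((n : ℝ) + b))).congr_of_eventuallyEq
  · filter_upwards [Ico_mem_nhdsGE_of_mem (⟨le_rfl, by linarith⟩ :
      (n : ℝ) + b ∈ Ico ((n : ℝ) + b) ((n : ℝ) + 1))] with x hx
    exact U_eq_zero' hs h2s1 h2sb hb1 hb n (by linarith [hx.1]) (by linarith [hx.2])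
  · exact U_eq_zero' hs h2s1 h2sb hb1 hb n (by linarith) (by linarith)

end LocalStructure

lemma Vs_int (s : ℝ) (hs : 0 ≤ s) (n : ℤ) : Vs s (n : ℝ) = 0 := by
  unfold Vs
  rw [Int.fract_intCast, if_pos hs]

lemma visc_key (s b : ℝ) (hs : 0 < s) (hs5 : s ≤ 1 / 5) (hb : b = 4 * s + 2 * s ^ 2)
    (φ : ℝ → ℝ) (hφ : ContDiff ℝ 1 φ) (x₀ : ℝ) :
    (IsLocalMax (U s b - φ) x₀ → Fk |3 / 2 + deriv φ x₀| - Vs s x₀ - 1 ≤ 0) ∧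
    (IsLocalMin (U s b - φ) x₀ → 0 ≤ Fk |3 / 2 + deriv φ x₀| - Vs s x₀ - 1) := by
  have h2s1 : 2 * s < 1 := by nlinarith
  have h2sb : 2 * s < b := by nlinarith
  have hb1 : b < 1 := by nlinarith
  have hφd : HasDerivAt φ (deriv φ x₀) x₀ := ((hφ.differentiable one_ne_zero) x₀).hasDerivAt
  obtain ⟨n, y, hy0, hy1, hxy⟩ : ∃ (n : ℤ) (y : ℝ), 0 ≤ y ∧ y < 1 ∧ x₀ = (n : ℝ) + y :=
    ⟨⌊x₀⌋, Int.fract x₀, Int.fract_nonneg x₀, Int.fract_lt_one x₀,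
      (Int.floor_add_fract x₀).symm⟩
  have hyx : x₀ - (n : ℝ) = y := by rw [hxy]; ring
  rcases eq_or_lt_of_le hy0 with h0 | h0
  · -- x₀ = n : convex kink
    have hx : x₀ = (n : ℝ) := by rw [hxy, ← h0, add_zero]
    rw [hx] at hφd ⊢
    constructor
    · intro hmax
      have hmax' : IsLocalMax (fun x => U s b x - φ x) (n : ℝ) := hmax
      have hr := max_right hmax' ((loc_D_right hs h2s1 n).sub hφd.hasDerivWithinAt)
      have hl := max_left hmax' ((loc_D_left hs h2s1 h2sb hb1 hb n).sub hφd.hasDerivWithinAt)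
      linarith
    · intro hmin
      have hmin' : IsLocalMin (fun x => U s b x - φ x) (n : ℝ) := hmin
      have hr := min_right hmin' ((loc_D_right hs h2s1 n).sub hφd.hasDerivWithinAt)
      have hl := min_left hmin' ((loc_D_left hs h2s1 h2sb hb1 hb n).sub hφd.hasDerivWithinAt)
      -- 0 ≤ deriv φ n ≤ 1/2
      have habs : |3 / 2 + deriv φ (n : ℝ)| = 3 / 2 + deriv φ (n : ℝ) :=
        abs_of_nonneg (by linarith)
      rw [Vs_int s hs.le n, habs, Fk_eq_one (by linarith) (by linarith)]
      norm_num
  · rcases lt_trichotomy y (2 * s) with h1 | h1 | h1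
    · -- classical region A
      have hU := loc_A (b := b) hs h2s1 n (x₀ := x₀) (by linarith) (by linarith)
      have habs : |x₀ - (n : ℝ) - s| ≤ s := abs_le.2 ⟨by linarith, by linarith⟩
      have hV : Vs s x₀ = s - |x₀ - (n : ℝ) - s| := by
        have hfr : Int.fract x₀ = x₀ - n := fract_eq n x₀ (by linarith) (by linarith)
        rw [Vs_eq_of_le x₀ (by rw [hfr]; linarith), hfr]
      have key : ∀ _ : (1 / 2 + s - |x₀ - (n : ℝ) - s|) - deriv φ x₀ = 0,
          Fk |3 / 2 + deriv φ x₀| - Vs s x₀ - 1 = 0 := by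
        intro hd0
        have hd : deriv φ x₀ = 1 / 2 + s - |x₀ - (n : ℝ) - s| := by linarith
        rw [hV, hd, show (3 / 2 + (1 / 2 + s - |x₀ - (n : ℝ) - s|) : ℝ)
          = 2 + (s - |x₀ - (n : ℝ) - s|) by ring,
          abs_of_nonneg (by linarith), Fk_two_add (by linarith)]
        ring
      constructor
      · intro hmax; exact (key (hmax.hasDerivAt_eq_zero (hU.sub hφd))).le
      · intro hmin; exact (key (hmin.hasDerivAt_eq_zero (hU.sub hφd))).ge
    · -- x₀ = n + 2s : concave kink
      have hx : x₀ = (n : ℝ) + 2 * s := by rw [hxy, h1]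
      have hV : Vs s ((n : ℝ) + 2 * s) = 0 := by
        apply Vs_eq_zero _ hs
        rw [fract_eq n ((n : ℝ) + 2 * s) (by linarith) (by linarith)]
        linarith
      rw [hx] at hφd ⊢
      constructor
      · intro hmax
        have hmax' : IsLocalMax (fun x => U s b x - φ x) ((n : ℝ) + 2 * s) := hmax
        have hr := max_right hmax'
          ((loc_E_right hs h2s1 h2sb hb1 n).sub hφd.hasDerivWithinAt)
        have hl := max_left hmax' ((loc_E_left hs h2s1 n).sub hφd.hasDerivWithinAt)
        -- -1/2 ≤ deriv φ ≤ 1/2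
        have habs : |3 / 2 + deriv φ ((n : ℝ) + 2 * s)| = 3 / 2 + deriv φ ((n : ℝ) + 2 * s) :=
          abs_of_nonneg (by linarith)
        rw [hV, habs, Fk_eq_one (by linarith) (by linarith)]
        norm_num
      · intro hmin
        have hmin' : IsLocalMin (fun x => U s b x - φ x) ((n : ℝ) + 2 * s) := hmin
        have hr := min_right hmin'
          ((loc_E_right hs h2s1 h2sb hb1 n).sub hφd.hasDerivWithinAt)
        have hl := min_left hmin' ((loc_E_left hs h2s1 n).sub hφd.hasDerivWithinAt)
        linarith
    · rcases lt_trichotomy y b with h2 | h2 | h2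
      · -- classical region B
        have hU := loc_B hs hb1 n (x₀ := x₀) (by linarith) (by linarith)
        have hV : Vs s x₀ = 0 := by
          apply Vs_eq_zero _ hs
          rw [fract_eq n x₀ (by linarith) (by linarith)]
          linarith
        have key : ∀ _ : (-(1 : ℝ) / 2) - deriv φ x₀ = 0,
            Fk |3 / 2 + deriv φ x₀| - Vs s x₀ - 1 = 0 := by
          intro hd0
          rw [hV, show (3 / 2 + deriv φ x₀ : ℝ) = 1 by linarith, abs_one,
            Fk_eq_one le_rfl one_le_two]
          ring
        constructor
        · intro hmax; exact (key (hmax.hasDerivAt_eq_zero (hU.sub hφd))).le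
        · intro hmin; exact (key (hmin.hasDerivAt_eq_zero (hU.sub hφd))).ge
      · -- x₀ = n + b : convex kink
        have hx : x₀ = (n : ℝ) + b := by rw [hxy, h2]
        have hV : Vs s ((n : ℝ) + b) = 0 := by
          apply Vs_eq_zero _ hs
          rw [fract_eq n ((n : ℝ) + b) (by linarith) (by linarith)]
          linarith
        rw [hx] at hφd ⊢
        constructor
        · intro hmax
          have hmax' : IsLocalMax (fun x => U s b x - φ x) ((n : ℝ) + b) := hmax
          have hr := max_right hmax'
            ((loc_F_right hs h2s1 h2sb hb1 hb n).sub hφd.hasDerivWithinAt)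
          have hl := max_left hmax'
            ((loc_F_left hs h2s1 h2sb hb1 n).sub hφd.hasDerivWithinAt)
          linarith
        · intro hmin
          have hmin' : IsLocalMin (fun x => U s b x - φ x) ((n : ℝ) + b) := hmin
          have hr := min_right hmin'
            ((loc_F_right hs h2s1 h2sb hb1 hb n).sub hφd.hasDerivWithinAt)
          have hl := min_left hmin'
            ((loc_F_left hs h2s1 h2sb hb1 n).sub hφd.hasDerivWithinAt)
          -- -1/2 ≤ deriv φ ≤ 0
          have habs : |3 / 2 + deriv φ ((n : ℝ) + b)| = 3 / 2 + deriv φ ((n : ℝ) + b) :=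
            abs_of_nonneg (by linarith)
          rw [hV, habs, Fk_eq_one (by linarith) (by linarith)]
          norm_num
      · -- classical region C
        have hU := loc_C (b := b) hs h2sb n (x₀ := x₀) (by linarith) (by linarith)
        have hV : Vs s x₀ = 0 := by
          apply Vs_eq_zero _ hs
          rw [fract_eq n x₀ (by linarith) (by linarith)]
          linarith
        have key : ∀ _ : (0 : ℝ) - deriv φ x₀ = 0,
            Fk |3 / 2 + deriv φ x₀| - Vs s x₀ - 1 = 0 := by
          intro hd0
          rw [hV, show (3 / 2 + deriv φ x₀ : ℝ) = 3 / 2 by linarith,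
            abs_of_nonneg (by norm_num : (0:ℝ) ≤ 3 / 2),
            Fk_eq_one (by norm_num) (by norm_num)]
          ring
        constructor
        · intro hmax; exact (key (hmax.hasDerivAt_eq_zero (hU.sub hφd))).le
        · intro hmin; exact (key (hmin.hasDerivAt_eq_zero (hU.sub hφd))).ge

theorem stmt14 (s : ℝ) (hs : 0 < s) (hs' : s ≤ 1 / 5) (b : ℝ) (hb : b = 4 * s + 2 * s ^ 2) :
    b < 1 ∧
    ∃ u0 : ℝ → ℝ, Continuous u0 ∧ Function.Periodic u0 1 ∧ u0 0 = 0 ∧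
      (∀ x ∈ Set.Ioo 0 (2 * s), HasDerivAt u0 (1 / 2 + Vs s x) x) ∧
      (∀ x ∈ Set.Ioo (2 * s) b, HasDerivAt u0 (-(1 : ℝ) / 2) x) ∧
      (∀ x ∈ Set.Icc b 1, u0 x = 0) ∧
      u0 b = 0 ∧
      ViscSol1 (fun x _ p => Fk |3 / 2 + p| - Vs s x - 1) u0 := by
  have h2s1 : 2 * s < 1 := by nlinarith
  have h2sb : 2 * s < b := by nlinarith
  have hb1 : b < 1 := by nlinarith
  refine ⟨hb1, U s b, ?_, ?_, ?_, ?_, ?_, ?_, ?_, ?_, ?_⟩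
  · -- continuity
    rw [continuous_iff_continuousAt]
    intro x₀
    obtain ⟨n, y, hy0, hy1, hxy⟩ : ∃ (n : ℤ) (y : ℝ), 0 ≤ y ∧ y < 1 ∧ x₀ = (n : ℝ) + y :=
      ⟨⌊x₀⌋, Int.fract x₀, Int.fract_nonneg x₀, Int.fract_lt_one x₀,
        (Int.floor_add_fract x₀).symm⟩
    have hyx : x₀ - (n : ℝ) = y := by rw [hxy]; ring
    rcases eq_or_lt_of_le hy0 with h0 | h0
    · have hx : x₀ = (n : ℝ) := by rw [hxy, ← h0, add_zero]
      rw [hx]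
      exact continuousAt_iff_continuous_left_right.2
        ⟨(loc_D_left hs h2s1 h2sb hb1 hb n).continuousWithinAt,
         (loc_D_right (b := b) hs h2s1 n).continuousWithinAt⟩
    · rcases lt_trichotomy y (2 * s) with h1 | h1 | h1
      · exact (loc_A (b := b) hs h2s1 n (by linarith) (by linarith)).continuousAt
      · have hx : x₀ = (n : ℝ) + 2 * s := by rw [hxy, h1]
        rw [hx]
        exact continuousAt_iff_continuous_left_right.2
          ⟨(loc_E_left (b := b) hs h2s1 n).continuousWithinAt,
           (loc_E_right hs h2s1 h2sb hb1 n).continuousWithinAt⟩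
      · rcases lt_trichotomy y b with h2 | h2 | h2
        · exact (loc_B hs hb1 n (by linarith) (by linarith)).continuousAt
        · have hx : x₀ = (n : ℝ) + b := by rw [hxy, h2]
          rw [hx]
          exact continuousAt_iff_continuous_left_right.2
            ⟨(loc_F_left hs h2s1 h2sb hb1 n).continuousWithinAt,
             (loc_F_right hs h2s1 h2sb hb1 hb n).continuousWithinAt⟩
        · exact (loc_C hs h2sb n (by linarith) (by linarith)).continuousAt
  · -- periodicity
    intro x
    unfold U
    rw [Int.fract_add_one]
  · -- u0 0 = 0
    simpa using U_int (b := b) hs 0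
  · -- derivative on (0, 2s)
    intro x hx
    have h := loc_A (b := b) hs h2s1 0 (x₀ := x) (by exact_mod_cast hx.1)
      (by push_cast; linarith [hx.2])
    have hfr : Int.fract x = x := Int.fract_eq_self.2 ⟨hx.1.le, by linarith [hx.2]⟩
    have hV : Vs s x = s - |x - s| := by
      rw [Vs_eq_of_le x (by rw [hfr]; exact hx.2.le), hfr]
    have he : (1 / 2 + s - |x - ((0 : ℤ) : ℝ) - s|) = 1 / 2 + Vs s x := by
      push_cast
      rw [sub_zero, hV]
      ring
    rwa [he] at h
  · -- derivative on (2s, b)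
    intro x hx
    exact loc_B hs hb1 0 (by push_cast; linarith [hx.1]) (by push_cast; linarith [hx.2])
  · -- zero on [b, 1]
    intro x hx
    rcases hx.2.eq_or_lt with h1 | h1
    · rw [h1]; simpa using U_int (b := b) hs 1
    · exact U_eq_zero' hs h2s1 h2sb hb1 hb 0 (by push_cast; linarith [hx.1])
        (by push_cast; linarith)
  · -- u0 b = 0
    exact U_eq_zero' hs h2s1 h2sb hb1 hb 0 (by push_cast; linarith) (by push_cast; linarith)
  · intro φ hφ x₀ hmax
    exact (visc_key s b hs hs' hb φ hφ x₀).1 hmax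
  · intro φ hφ x₀ hmin
    exact (visc_key s b hs hs' hb φ hφ x₀).2 hmin
end
end

section
/- Let H : 𝕋ⁿ × ℝⁿ → ℝ be continuous and coercive, i.e., H(x,p) → +∞ as |p| → ∞ uniformly for x ∈ 𝕋ⁿ. Then there exists a constant C > 0, independent of ε, such that for every ε > 0 and every continuous viscosity solution u^ε of ε u^ε(x) + H(x, Du^ε(x)) = 0 on 𝕋ⁿ, the function u^ε is Lipschitz continuous with Lipschitz constant at most C. -/
open Filter Set
open scoped Topology

noncomputable section

/-- Functions on the torus `𝕋ⁿ` are identified with `ℤⁿ`-periodic functions on `ℝⁿ`. -/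
def ZnPeriodic {n : ℕ} (u : EuclideanSpace ℝ (Fin n) → ℝ) : Prop :=
  ∀ (x : EuclideanSpace ℝ (Fin n)) (k : Fin n → ℤ),
    u (x + (EuclideanSpace.equiv (Fin n) ℝ).symm (fun i => (k i : ℝ))) = u x

/-- Viscosity subsolution of `E(x, u(x), Du(x)) = 0` on `ℝⁿ`. -/
def ViscSub {n : ℕ} (E : EuclideanSpace ℝ (Fin n) → ℝ → EuclideanSpace ℝ (Fin n) → ℝ)
    (u : EuclideanSpace ℝ (Fin n) → ℝ) : Prop :=
  ∀ φ : EuclideanSpace ℝ (Fin n) → ℝ, ContDiff ℝ 1 φ →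
    ∀ x₀ : EuclideanSpace ℝ (Fin n), IsLocalMax (u - φ) x₀ →
      E x₀ (u x₀) (gradient φ x₀) ≤ 0

/-- Viscosity supersolution of `E(x, u(x), Du(x)) = 0` on `ℝⁿ`. -/
def ViscSuper {n : ℕ} (E : EuclideanSpace ℝ (Fin n) → ℝ → EuclideanSpace ℝ (Fin n) → ℝ)
    (u : EuclideanSpace ℝ (Fin n) → ℝ) : Prop :=
  ∀ φ : EuclideanSpace ℝ (Fin n) → ℝ, ContDiff ℝ 1 φ →
    ∀ x₀ : EuclideanSpace ℝ (Fin n), IsLocalMin (u - φ) x₀ →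
      0 ≤ E x₀ (u x₀) (gradient φ x₀)

/-- Viscosity solution. -/
def ViscSol {n : ℕ} (E : EuclideanSpace ℝ (Fin n) → ℝ → EuclideanSpace ℝ (Fin n) → ℝ)
    (u : EuclideanSpace ℝ (Fin n) → ℝ) : Prop :=
  ViscSub E u ∧ ViscSuper E u

lemma torus_reduce {n : ℕ} (x : EuclideanSpace ℝ (Fin n)) :
    ∃ k : Fin n → ℤ,
      ‖x + (EuclideanSpace.equiv (Fin n) ℝ).symm (fun i => (k i : ℝ))‖ ≤ Real.sqrt n := by
  refine ⟨fun i => -⌊x i⌋, ?_⟩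
  rw [EuclideanSpace.norm_eq]
  have hcoord : ∀ i, (x + (EuclideanSpace.equiv (Fin n) ℝ).symm
      (fun i => ((-⌊x i⌋ : ℤ) : ℝ))) i = Int.fract (x i) := by
    intro i
    have : (x + (EuclideanSpace.equiv (Fin n) ℝ).symm
        (fun i => ((-⌊x i⌋ : ℤ) : ℝ))) i = x i + ((-⌊x i⌋ : ℤ) : ℝ) := rfl
    rw [this, Int.fract]
    push_cast
    ring
  have hle : (∑ i, ‖(x + (EuclideanSpace.equiv (Fin n) ℝ).symm
      (fun i => ((-⌊x i⌋ : ℤ) : ℝ))) i‖ ^ 2) ≤ (n : ℝ) := by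
    calc _ ≤ ∑ _i : Fin n, (1:ℝ) := by
            refine Finset.sum_le_sum fun i _ => ?_
            rw [hcoord i]
            have h0 := Int.fract_nonneg (x i)
            have h1 := Int.fract_lt_one (x i)
            rw [Real.norm_eq_abs, abs_of_nonneg h0]
            nlinarith
      _ = (n : ℝ) := by simp
  calc Real.sqrt (∑ i, ‖(x + (EuclideanSpace.equiv (Fin n) ℝ).symm
      (fun i => ((-⌊x i⌋ : ℤ) : ℝ))) i‖ ^ 2) ≤ Real.sqrt n := Real.sqrt_le_sqrt hle
    _ = _ := rfl

lemma periodic_max {n : ℕ} (f : EuclideanSpace ℝ (Fin n) → ℝ) (hf : Continuous f)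
    (hp : ∀ (x : EuclideanSpace ℝ (Fin n)) (k : Fin n → ℤ),
      f (x + (EuclideanSpace.equiv (Fin n) ℝ).symm (fun i => (k i : ℝ))) = f x) :
    ∃ z, ∀ x, f x ≤ f z := by
  have hK : IsCompact (Metric.closedBall (0 : EuclideanSpace ℝ (Fin n)) (Real.sqrt n)) :=
    isCompact_closedBall _ _
  have hne : (Metric.closedBall (0 : EuclideanSpace ℝ (Fin n)) (Real.sqrt n)).Nonempty :=
    ⟨0, Metric.mem_closedBall_self (Real.sqrt_nonneg _)⟩
  obtain ⟨z, _, hz⟩ := hK.exists_isMaxOn hne hf.continuousOn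
  refine ⟨z, fun x => ?_⟩
  obtain ⟨k, hk⟩ := torus_reduce x
  have hmem : x + (EuclideanSpace.equiv (Fin n) ℝ).symm (fun i => (k i : ℝ)) ∈
      Metric.closedBall (0 : EuclideanSpace ℝ (Fin n)) (Real.sqrt n) := by
    simpa [Metric.mem_closedBall, dist_zero_right] using hk
  calc f x = f (x + (EuclideanSpace.equiv (Fin n) ℝ).symm (fun i => (k i : ℝ))) := (hp x k).symm
    _ ≤ f z := hz hmem

lemma sqrtfun_gradient {n : ℕ} (C δ : ℝ) (hδ : δ ≠ 0) (y z : EuclideanSpace ℝ (Fin n)) :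
    HasGradientAt (fun x => C * Real.sqrt (‖x - y‖ ^ 2 + δ ^ 2))
      ((C / Real.sqrt (‖z - y‖ ^ 2 + δ ^ 2)) • (z - y)) z := by
  have hpos : 0 < ‖z - y‖ ^ 2 + δ ^ 2 := by positivity
  have h1 : HasFDerivAt (fun x : EuclideanSpace ℝ (Fin n) => ‖x - y‖ ^ 2 + δ ^ 2)
      (2 • (innerSL ℝ (z - y))) z := by
    have := ((hasFDerivAt_id z).sub_const y).norm_sq
    simpa using this.add_const (δ ^ 2)
  have h2 : HasDerivAt Real.sqrt (1 / (2 * Real.sqrt (‖z - y‖ ^ 2 + δ ^ 2)))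
      (‖z - y‖ ^ 2 + δ ^ 2) := Real.hasDerivAt_sqrt hpos.ne'
  have h3 := (h2.comp_hasFDerivAt z h1).const_mul C
  rw [hasGradientAt_iff_hasFDerivAt]
  convert h3 using 1
  have hs : Real.sqrt (‖z - y‖ ^ 2 + δ ^ 2) > 0 := Real.sqrt_pos.mpr hpos
  case e'_9 => rfl
  case e'_11 => funext x; simp only [Function.comp_apply, add_comm]
  ext w
  simp [InnerProductSpace.toDual_apply_apply, real_inner_smul_left, smul_smul]
  field_simp

lemma sqrtfun_contDiff {n : ℕ} (C δ : ℝ) (hδ : δ ≠ 0) (y : EuclideanSpace ℝ (Fin n)) :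
    ContDiff ℝ 1 (fun x => C * Real.sqrt (‖x - y‖ ^ 2 + δ ^ 2)) := by
  have h1 : ContDiff ℝ 1 (fun x : EuclideanSpace ℝ (Fin n) => ‖x - y‖ ^ 2 + δ ^ 2) :=
    (((contDiff_id.sub contDiff_const).norm_sq (𝕜 := ℝ))).add contDiff_const
  exact contDiff_const.mul (h1.sqrt (fun x => by positivity))

set_option maxHeartbeats 1000000 in
theorem stmt17 {n : ℕ}
    (H : EuclideanSpace ℝ (Fin n) → EuclideanSpace ℝ (Fin n) → ℝ)
    (hHcont : Continuous (fun q : EuclideanSpace ℝ (Fin n) × EuclideanSpace ℝ (Fin n) => H q.1 q.2))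
    (hHper : ∀ (x p : EuclideanSpace ℝ (Fin n)) (k : Fin n → ℤ),
      H (x + (EuclideanSpace.equiv (Fin n) ℝ).symm (fun i => (k i : ℝ))) p = H x p)
    -- coercivity: H(x,p) → +∞ as |p| → ∞, uniformly in x
    (hcoer : ∀ C : ℝ, ∃ R : ℝ, ∀ (x p : EuclideanSpace ℝ (Fin n)), R ≤ ‖p‖ → C ≤ H x p) :
    ∃ C : ℝ, 0 < C ∧ ∀ ε : ℝ, 0 < ε →
      ∀ u : EuclideanSpace ℝ (Fin n) → ℝ, Continuous u → ZnPeriodic u →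
        ViscSol (fun x r p => ε * r + H x p) u →
        ∀ x y : EuclideanSpace ℝ (Fin n), |u x - u y| ≤ C * ‖x - y‖ := by
  -- bound on |H(·,0)|
  obtain ⟨zH, hzH⟩ := periodic_max (fun x => |H x 0|)
    ((hHcont.comp (continuous_id.prodMk continuous_const)).abs)
    (fun x k => by simp only [hHper])
  set M₀ : ℝ := |H zH 0| with hM₀def
  have hM₀ : ∀ x, |H x 0| ≤ M₀ := hzH
  obtain ⟨R, hR⟩ := hcoer (M₀ + 1)
  set R' : ℝ := max R 1 with hR'def
  have hR'1 : (1:ℝ) ≤ R' := le_max_right _ _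
  have hR'pos : (0:ℝ) < R' := lt_of_lt_of_le one_pos hR'1
  refine ⟨2 * R', by positivity, ?_⟩
  set C : ℝ := 2 * R' with hCdef
  have hCpos : 0 < C := by positivity
  intro ε hε u hu hper hsol
  obtain ⟨zmax, hzmax⟩ := periodic_max u hu hper
  obtain ⟨zmin, hzmin⟩ := periodic_max (fun x => -u x) hu.neg
    (fun x k => by rw [hper])
  set M : ℝ := u zmax with hMdef
  -- ε u bounds
  have hmax0 : IsLocalMax (u - fun _ => (0:ℝ)) zmax := by
    have he : (u - fun _ => (0:ℝ)) = u := by funext a; simp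
    rw [he]
    exact Filter.Eventually.of_forall hzmax
  have hmin0 : IsLocalMin (u - fun _ => (0:ℝ)) zmin := by
    have he : (u - fun _ => (0:ℝ)) = u := by funext a; simp
    rw [he]
    exact Filter.Eventually.of_forall (fun x => by have := hzmin x; simp at this; linarith)
  have h1 : ε * u zmax + H zmax 0 ≤ 0 := by
    have := hsol.1 (fun _ => (0:ℝ)) contDiff_const zmax hmax0
    simpa [gradient_const] using this
  have h2 : 0 ≤ ε * u zmin + H zmin 0 := by
    have := hsol.2 (fun _ => (0:ℝ)) contDiff_const zmin hmin0
    simpa [gradient_const] using this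
  have hub : ∀ w, ε * u w ≤ M₀ := by
    intro w
    have habs1 : -H zmax 0 ≤ M₀ := (neg_le_abs _).trans (hM₀ zmax)
    have := mul_le_mul_of_nonneg_left (hzmax w) hε.le
    linarith
  have hlb : ∀ w, -M₀ ≤ ε * u w := by
    intro w
    have habs2 : -H zmin 0 ≥ -M₀ := by have := (le_abs_self (H zmin 0)).trans (hM₀ zmin); linarith
    have h3 : u zmin ≤ u w := by have := hzmin w; simp at this; linarith
    have := mul_le_mul_of_nonneg_left h3 hε.le
    linarith
  -- key one-sided estimate
  have key : ∀ x₁ y : EuclideanSpace ℝ (Fin n), u x₁ - u y ≤ C * ‖x₁ - y‖ := by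
    intro x₁ y
    by_contra hcon
    push_neg at hcon
    set a : ℝ := u x₁ - u y - C * ‖x₁ - y‖ with hadef
    have hapos : 0 < a := by simp only [hadef]; linarith
    obtain ⟨η, hηpos, hη⟩ := Metric.continuousAt_iff.mp hu.continuousAt (a/2) (by positivity)
    set δ : ℝ := min η (a / (4 * C)) with hδdef
    have hδpos : 0 < δ := lt_min hηpos (div_pos hapos (by linarith))
    have hδη : δ ≤ η := min_le_left _ _
    have hCδ : C * δ ≤ a / 4 := by
      have h4 : δ ≤ a / (4 * C) := min_le_right _ _
      calc C * δ ≤ C * (a / (4 * C)) := mul_le_mul_of_nonneg_left h4 hCpos.le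
        _ = a / 4 := by field_simp
    set φ : EuclideanSpace ℝ (Fin n) → ℝ :=
      fun z => C * Real.sqrt (‖z - y‖ ^ 2 + δ ^ 2) with hφdef
    have hφc : ContDiff ℝ 1 φ := sqrtfun_contDiff C δ hδpos.ne' y
    have hφlow : ∀ z, C * ‖z - y‖ ≤ φ z := by
      intro z
      have h4 : Real.sqrt (‖z - y‖ ^ 2) ≤ Real.sqrt (‖z - y‖ ^ 2 + δ ^ 2) :=
        Real.sqrt_le_sqrt (by nlinarith [pow_pos hδpos 2])
      rw [Real.sqrt_sq (norm_nonneg _)] at h4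
      exact mul_le_mul_of_nonneg_left h4 hCpos.le
    have hφup : ∀ z, φ z ≤ C * (‖z - y‖ + δ) := by
      intro z
      have h4 : Real.sqrt (‖z - y‖ ^ 2 + δ ^ 2) ≤ Real.sqrt ((‖z - y‖ + δ) ^ 2) :=
        Real.sqrt_le_sqrt (by nlinarith [norm_nonneg (z - y), hδpos.le])
      rw [Real.sqrt_sq (by positivity)] at h4
      exact mul_le_mul_of_nonneg_left h4 hCpos.le
    set g : EuclideanSpace ℝ (Fin n) → ℝ := fun z => u z - φ z with hgdef
    have hgx₁ : u y + a / 2 ≤ g x₁ := by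
      have h5 := hφup x₁
      have h6 : u x₁ = u y + a + C * ‖x₁ - y‖ := by simp only [hadef]; ring
      show u y + a / 2 ≤ u x₁ - φ x₁
      linarith
    -- max of g exists
    set ρ : ℝ := (M - g x₁) / C + 1 with hρdef
    have hx₁mem : x₁ ∈ Metric.closedBall y ρ := by
      rw [Metric.mem_closedBall, dist_eq_norm]
      have h5 : C * ‖x₁ - y‖ ≤ M - g x₁ := by
        have h6 := hφlow x₁
        have h7 : u x₁ ≤ M := hzmax x₁
        simp only [hgdef] at *
        linarith
      have h8 : ‖x₁ - y‖ ≤ (M - g x₁) / C := (le_div_iff₀ hCpos).mpr (by linarith)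
      calc ‖x₁ - y‖ ≤ (M - g x₁) / C := h8
        _ ≤ (M - g x₁) / C + 1 := by linarith
        _ = ρ := hρdef.symm
    obtain ⟨x₀, hx₀mem, hx₀max⟩ := (isCompact_closedBall y ρ).exists_isMaxOn ⟨x₁, hx₁mem⟩
      (hu.sub hφc.continuous).continuousOn
    have hglobal : ∀ z, g z ≤ g x₀ := by
      intro z
      by_cases hz : z ∈ Metric.closedBall y ρ
      · exact hx₀max hz
      · have hdz : ρ < ‖z - y‖ := by
          rw [Metric.mem_closedBall, dist_eq_norm] at hz; linarith [not_le.mp hz]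
        have h5 : g z ≤ M - C * ‖z - y‖ := by
          have := hφlow z
          have := hzmax z
          simp only [hgdef]; linarith
        have hCρ : C * ρ = (M - g x₁) + C := by
          simp only [hρdef]; field_simp
        have h6 : g x₁ ≤ g x₀ := hx₀max hx₁mem
        have h7 := mul_lt_mul_of_pos_left hdz hCpos
        linarith
    have hloc : IsLocalMax (u - φ) x₀ := by
      have he : (u - φ) = g := by funext z; simp [hgdef]
      rw [he]
      exact Filter.Eventually.of_forall hglobal
    have h3 := hsol.1 φ hφc x₀ hloc
    have hgrad : gradient φ x₀ = (C / Real.sqrt (‖x₀ - y‖ ^ 2 + δ ^ 2)) • (x₀ - y) :=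
      (sqrtfun_gradient C δ hδpos.ne' y x₀).gradient
    rw [hgrad] at h3
    -- lower bound on ‖x₀ - y‖
    have hgg : u y + a / 2 ≤ g x₀ := le_trans hgx₁ (hx₀max hx₁mem)
    have hux₀ : u y + a / 2 ≤ u x₀ := by
      have h7 : 0 ≤ φ x₀ :=
        le_trans (mul_nonneg hCpos.le (norm_nonneg _)) (hφlow x₀)
      have h9 : g x₀ = u x₀ - φ x₀ := rfl
      linarith [hgg, h9 ▸ hgg]
    have hdist : η ≤ ‖x₀ - y‖ := by
      by_contra hlt
      push_neg at hlt
      have := hη (show dist x₀ y < η by rwa [dist_eq_norm])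
      rw [Real.dist_eq] at this
      have := abs_lt.mp this
      linarith [this.2]
    have hδs : δ ≤ ‖x₀ - y‖ := le_trans hδη hdist
    -- norm of gradient
    set s : ℝ := ‖x₀ - y‖ with hsdef
    set t : ℝ := Real.sqrt (s ^ 2 + δ ^ 2) with htdef
    have htpos : 0 < t :=
      Real.sqrt_pos.mpr (add_pos_of_nonneg_of_pos (sq_nonneg s) (pow_pos hδpos 2))
    have hnorm : ‖(C / t) • (x₀ - y)‖ = (C / t) * s := by
      rw [norm_smul, Real.norm_eq_abs, abs_of_nonneg (div_nonneg hCpos.le htpos.le)]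
    have hsnn : 0 ≤ s := norm_nonneg _
    have ht2s : t ≤ 2 * s := by
      have h4 : Real.sqrt (s ^ 2 + δ ^ 2) ≤ Real.sqrt ((2 * s) ^ 2) :=
        Real.sqrt_le_sqrt (by nlinarith [hδs, hδpos.le])
      rw [Real.sqrt_sq (by linarith)] at h4
      exact h4
    have hRle : R' ≤ ‖(C / t) • (x₀ - y)‖ := by
      rw [hnorm, div_mul_eq_mul_div, le_div_iff₀ htpos]
      calc R' * t ≤ R' * (2 * s) := mul_le_mul_of_nonneg_left ht2s hR'pos.le
        _ = C * s := by rw [hCdef]; ring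
    have hHbig : M₀ + 1 ≤ H x₀ ((C / t) • (x₀ - y)) :=
      hR x₀ _ (le_trans (le_max_left R 1) hRle)
    have hHsmall : H x₀ ((C / t) • (x₀ - y)) ≤ M₀ := by
      have h10 := hlb x₀
      have h3' : ε * u x₀ + H x₀ ((C / t) • (x₀ - y)) ≤ 0 := h3
      linarith
    linarith
  intro x y
  rw [abs_sub_le_iff]
  constructor
  · exact key x y
  · calc u y - u x ≤ C * ‖y - x‖ := key y x
      _ = C * ‖x - y‖ := by rw [norm_sub_rev]
end
end
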